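/- arXiv:1909.06984 — 6 statements merged into one kernel-verified Lean document; each statement's English description precedes it below -/
import Mathlib

section
/- Let V : ℕ → ℝ be a sequence with 0 ≤ V_i < 1 for every i such that the series ∑_i V_i is not summable. Then the stick-breaking weights π_j := V_j · ∏_{i=0}^{j−1} (1 − V_i) are nonnegative and satisfy ∑'_{j=0}^{∞} π_j = 1. -/
/-- If `0 ≤ V i < 1` for all `i` and `∑ V i` diverges, then the stick-breaking
weights `π j = V j * ∏_{i<j} (1 - V i)` are nonnegative and sum to `1`. -/
theorem stick_breaking_weights_tsum_eq_one
    (V : ℕ → ℝ) (hV : ∀ i, 0 ≤ V i ∧ V i < 1) (hsum : ¬ Summable V) :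
    (∀ j, 0 ≤ V j * ∏ i ∈ Finset.range j, (1 - V i)) ∧
      ∑' j : ℕ, V j * ∏ i ∈ Finset.range j, (1 - V i) = 1 := by
  have hprod_nonneg : ∀ n, 0 ≤ ∏ i ∈ Finset.range n, (1 - V i) := fun n =>
    Finset.prod_nonneg fun i _ => by linarith [(hV i).2]
  have hnn : ∀ j, 0 ≤ V j * ∏ i ∈ Finset.range j, (1 - V i) := fun j =>
    mul_nonneg (hV j).1 (hprod_nonneg j)
  refine ⟨hnn, ?_⟩
  -- partial sums telescope
  have hpartial : ∀ n, ∑ j ∈ Finset.range n, V j * ∏ i ∈ Finset.range j, (1 - V i)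
      = 1 - ∏ i ∈ Finset.range n, (1 - V i) := by
    intro n
    induction n with
    | zero => simp
    | succ n ih =>
      rw [Finset.sum_range_succ, ih, Finset.prod_range_succ]
      ring
  -- ∏ ≤ exp(-∑ V)
  have hle : ∀ n, ∏ i ∈ Finset.range n, (1 - V i) ≤ Real.exp (-(∑ i ∈ Finset.range n, V i)) := by
    intro n
    rw [← Finset.sum_neg_distrib, Real.exp_sum]
    exact Finset.prod_le_prod (fun i _ => by linarith [(hV i).2])
      (fun i _ => by linarith [Real.add_one_le_exp (-(V i))])
  -- partial sums of V tend to ∞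
  have htop : Filter.Tendsto (fun n => ∑ i ∈ Finset.range n, V i) Filter.atTop Filter.atTop :=
    (not_summable_iff_tendsto_nat_atTop_of_nonneg (fun i => (hV i).1)).1 hsum
  have hprod0 : Filter.Tendsto (fun n => ∏ i ∈ Finset.range n, (1 - V i))
      Filter.atTop (nhds 0) := by
    apply squeeze_zero hprod_nonneg hle
    exact Real.tendsto_exp_atBot.comp (Filter.tendsto_neg_atBot_iff.2 htop)
  have h1 : Filter.Tendsto (fun n => ∑ j ∈ Finset.range n,
      V j * ∏ i ∈ Finset.range j, (1 - V i)) Filter.atTop (nhds 1) := by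
    simp only [hpartial]
    simpa using (tendsto_const_nhds (x := (1:ℝ))).sub hprod0
  exact ((hasSum_iff_tendsto_nat_of_nonneg hnn 1).2 h1).tsum_eq
end

section
/- Let (Ω, F, P) be a probability space and let (V_n)_{n∈ℕ} be a sequence of independent, identically distributed real-valued random variables with 0 ≤ V_n(ω) < 1 for all ω, and suppose there exists δ > 0 with P(V_0 ≥ δ) > 0. Then P-almost surely the stick-breaking weights satisfy ∑'_{j=0}^{∞} V_j · ∏_{i=0}^{j−1} (1 − V_i) = 1. -/
/-!
The partial sums of the stick-breaking weights telescope to `1 - ∏_{i<n} (1 - V i)`, so it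
suffices that this product of factors in `[0, 1]` tends to `0`. By the second Borel–Cantelli
lemma, almost surely `V n ≥ δ` for infinitely many `n`; each such index multiplies the
(decreasing) product by at most `1 - δ`, which forces its limit `L` to satisfy `L ≤ (1 - δ) L`,
hence `L = 0`.
-/

open MeasureTheory ProbabilityTheory Filter Topology Finset

def stickBreakingWeight {R : Type*} [CommRing R] (v : ℕ → R) (j : ℕ) : R :=
  v j * ∏ i ∈ range j, (1 - v i)

theorem sum_range_stickBreakingWeight {R : Type*} [CommRing R] (v : ℕ → R) (n : ℕ) :
    ∑ j ∈ range n, stickBreakingWeight v j = 1 - ∏ i ∈ range n, (1 - v i) := by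
  induction n with
  | zero => simp
  | succ n ih =>
    rw [sum_range_succ, ih, prod_range_succ, stickBreakingWeight]
    ring

section UnitInterval

variable {v : ℕ → ℝ} (h0 : ∀ n, 0 ≤ v n) (h1 : ∀ n, v n ≤ 1)
include h0 h1

theorem tendsto_prod_range_one_sub_of_frequently_le {δ : ℝ} (hδ : 0 < δ)
    (hfreq : ∃ᶠ n in atTop, δ ≤ v n) :
    Tendsto (fun n ↦ ∏ i ∈ range n, (1 - v i)) atTop (𝓝 0) := by
  set Q : ℕ → ℝ := fun n ↦ ∏ i ∈ range n, (1 - v i)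
  have hQ_nonneg (n : ℕ) : 0 ≤ Q n := prod_nonneg fun i _ ↦ sub_nonneg.2 (h1 i)
  have hQ_succ (n : ℕ) : Q (n + 1) = Q n * (1 - v n) := prod_range_succ _ n
  have hQ_anti : Antitone Q := antitone_nat_of_succ_le fun n ↦ by
    rw [hQ_succ]
    exact mul_le_of_le_one_right (hQ_nonneg n) (by linarith [h0 n])
  have hQ_lim : Tendsto Q atTop (𝓝 (⨅ n, Q n)) :=
    tendsto_atTop_ciInf hQ_anti ⟨0, Set.forall_mem_range.2 hQ_nonneg⟩
  set L := ⨅ n, Q n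
  obtain ⟨φ, hφ_mono, hφ⟩ := extraction_of_frequently_atTop hfreq
  have hQφ_succ_le (k : ℕ) : Q (φ k + 1) ≤ (1 - δ) * Q (φ k) := by
    rw [hQ_succ, mul_comm]
    exact mul_le_mul_of_nonneg_right (by linarith [hφ k]) (hQ_nonneg _)
  have hL_le : L ≤ (1 - δ) * L :=
    le_of_tendsto_of_tendsto'
      (hQ_lim.comp (tendsto_atTop_mono (fun k ↦ (φ k).le_succ) hφ_mono.tendsto_atTop))
      ((hQ_lim.comp hφ_mono.tendsto_atTop).const_mul (1 - δ)) hQφ_succ_le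
  have hL_nonneg : 0 ≤ L := le_ciInf hQ_nonneg
  rwa [show L = 0 by nlinarith] at hQ_lim

theorem hasSum_stickBreakingWeight_one_of_frequently_le {δ : ℝ} (hδ : 0 < δ)
    (hfreq : ∃ᶠ n in atTop, δ ≤ v n) :
    HasSum (stickBreakingWeight v) 1 := by
  have hw_nonneg (j : ℕ) : 0 ≤ stickBreakingWeight v j :=
    mul_nonneg (h0 j) (prod_nonneg fun i _ ↦ sub_nonneg.2 (h1 i))
  rw [hasSum_iff_tendsto_nat_of_nonneg hw_nonneg]
  simp only [sum_range_stickBreakingWeight]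
  simpa using tendsto_const_nhds.sub (tendsto_prod_range_one_sub_of_frequently_le h0 h1 hδ hfreq)

end UnitInterval

theorem ae_frequently_mem_of_iIndepFun_identDistrib {Ω β : Type*} [MeasurableSpace Ω]
    [MeasurableSpace β] {P : Measure Ω} {X : ℕ → Ω → β} (hmeas : ∀ n, Measurable (X n))
    (hindep : iIndepFun X P) (hident : ∀ n, IdentDistrib (X n) (X 0) P P) {S : Set β}
    (hS : MeasurableSet S) (hpos : P (X 0 ⁻¹' S) ≠ 0) :
    ∀ᵐ ω ∂P, ∃ᶠ n in atTop, X n ω ∈ S := by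
  have := hindep.isProbabilityMeasure
  have hsm (n : ℕ) : MeasurableSet (X n ⁻¹' S) := hmeas n hS
  have hindepSet : iIndepSet (fun n ↦ X n ⁻¹' S) P :=
    (iIndepSet_iff_meas_biInter hsm).2 fun t ↦
      hindep.measure_inter_preimage_eq_mul t (sets := fun _ ↦ S) fun _ _ ↦ hS
  have htsum : ∑' n, P (X n ⁻¹' S) = ⊤ := by
    simp_rw [fun n ↦ (hident n).measure_mem_eq hS]
    exact ENNReal.tsum_const_eq_top_of_ne_zero hpos
  have hlimsup : limsup (fun n ↦ X n ⁻¹' S) atTop ∈ ae P :=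
    (mem_ae_iff_prob_eq_one (.measurableSet_limsup hsm)).2
      (measure_limsup_eq_one hsm hindepSet htsum)
  filter_upwards [hlimsup] with ω hω
  simpa only [mem_limsup_iff_frequently_mem, Set.mem_preimage] using hω

theorem stick_breaking_weights_tsum_eq_one_ae_general
    {Ω : Type*} [MeasurableSpace Ω] (P : Measure Ω)
    (V : ℕ → Ω → ℝ) (hmeas : ∀ n, Measurable (V n))
    (hindep : iIndepFun V P)
    (hident : ∀ n, IdentDistrib (V n) (V 0) P P)
    (hbdd : ∀ n ω, 0 ≤ V n ω ∧ V n ω < 1)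
    (δ : ℝ) (hδ : 0 < δ) (hpos : 0 < P {ω | δ ≤ V 0 ω}) :
    ∀ᵐ ω ∂P, ∑' j : ℕ, V j ω * ∏ i ∈ Finset.range j, (1 - V i ω) = 1 := by
  filter_upwards [ae_frequently_mem_of_iIndepFun_identDistrib hmeas hindep hident
    measurableSet_Ici hpos.ne'] with ω hω
  exact (hasSum_stickBreakingWeight_one_of_frequently_le (fun n ↦ (hbdd n ω).1)
    (fun n ↦ (hbdd n ω).2.le) hδ hω).tsum_eq

/-- If `(V n)` is an i.i.d. sequence of random variables with values in `[0,1)`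
which is not almost surely arbitrarily small (there is `δ > 0` with
`P(V 0 ≥ δ) > 0`), then almost surely the stick-breaking weights
`π j = V j * ∏_{i<j} (1 - V i)` sum to `1`. -/
theorem stick_breaking_weights_tsum_eq_one_ae
    {Ω : Type*} [MeasurableSpace Ω] (P : Measure Ω) [IsProbabilityMeasure P]
    (V : ℕ → Ω → ℝ) (hmeas : ∀ n, Measurable (V n))
    (hindep : iIndepFun V P)
    (hident : ∀ n, IdentDistrib (V n) (V 0) P P)
    (hbdd : ∀ n ω, 0 ≤ V n ω ∧ V n ω < 1)
    (δ : ℝ) (hδ : 0 < δ) (hpos : 0 < P {ω | δ ≤ V 0 ω}) :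
    ∀ᵐ ω ∂P, ∑' j : ℕ, V j ω * ∏ i ∈ Finset.range j, (1 - V i ω) = 1 :=
  stick_breaking_weights_tsum_eq_one_ae_general P V hmeas hindep hident hbdd δ hδ hpos
end

section
/- For every real number α and every natural number N ≥ 1, summing over all set partitions P of {0, …, N−1}: ∑_P α^{|P|} · ∏_{B ∈ P} (|B| − 1)! = ∏_{t=0}^{N−1} (α + t), where |P| is the number of blocks of P and |B| is the cardinality of block B. -/
/-!
Adding a new element `a` to a set `t` turns each partition `P` of `t` into exactly `|P| + 1`
partitions of `insert a t`: `a` either forms a new singleton block, which multiplies the weight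
`∏_B α (|B| - 1)!` by `α`, or joins a block `B` of `P`, which multiplies it by `|B|`. As
`∑_B |B| = |t|`, each step multiplies the total weight by `α + |t|`, giving the rising factorial.
-/

open Finset
open scoped Nat

/-- A `Finpartition` is determined by its parts, so over a fintype there are
finitely many finpartitions. -/
noncomputable instance {α : Type*} [Lattice α] [OrderBot α] [Fintype α] [DecidableEq α]
    (a : α) : Fintype (Finpartition a) :=
  Fintype.ofInjective Finpartition.parts fun P Q h => by
    cases P; cases Q; simpa using h

lemma Finpartition.avoid_parts {α : Type*} [GeneralizedBooleanAlgebra α] [DecidableEq α]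
    {a : α} (P : Finpartition a) (b : α) :
    (P.avoid b).parts = (P.parts.image (· \ b)).erase ⊥ := rfl

namespace Finpartition

variable {ι : Type*} [DecidableEq ι] {s t : Finset ι} {a : ι} {B : Finset ι}

lemma sup_parts_erase (P : Finpartition s) (hB : B ∈ P.parts) :
    (P.parts.erase B).sup id = s \ B := by
  ext x
  simp only [mem_sup, mem_erase, id, mem_sdiff]
  constructor
  · rintro ⟨C, ⟨hCB, hC⟩, hxC⟩
    exact ⟨P.le hC hxC, fun hxB => hCB (P.eq_of_mem_parts hC hB hxC hxB)⟩
  · rintro ⟨hxs, hxB⟩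
    obtain ⟨C, hC, hxC⟩ := P.exists_mem hxs
    exact ⟨C, ⟨by rintro rfl; exact hxB hxC, hC⟩, hxC⟩

def erasePart (P : Finpartition s) (hB : B ∈ P.parts) : Finpartition (s \ B) :=
  P.ofSubset (erase_subset B P.parts) (P.sup_parts_erase hB)

@[simp]
lemma erasePart_parts (P : Finpartition s) (hB : B ∈ P.parts) :
    (P.erasePart hB).parts = P.parts.erase B := rfl

def extendSingleton (P : Finpartition t) (ha : a ∉ t) : Finpartition (insert a t) :=
  P.extend (singleton_ne_empty a) (disjoint_singleton_right.2 ha)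
    (by rw [sup_eq_union, union_comm, insert_eq])

@[simp]
lemma extendSingleton_parts (P : Finpartition t) (ha : a ∉ t) :
    (P.extendSingleton ha).parts = insert {a} P.parts := rfl

def insertIntoPart (P : Finpartition t) (ha : a ∉ t) (hB : B ∈ P.parts) :
    Finpartition (insert a t) :=
  (P.erasePart hB).extend (insert_nonempty a B).ne_empty
    (disjoint_insert_right.2 ⟨fun h => ha (mem_sdiff.1 h).1, sdiff_disjoint⟩)
    (by rw [sup_eq_union, union_insert, sdiff_union_of_subset (P.le hB)])

@[simp]
lemma insertIntoPart_parts (P : Finpartition t) (ha : a ∉ t) (hB : B ∈ P.parts) :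
    (P.insertIntoPart ha hB).parts = insert (insert a B) (P.parts.erase B) := rfl

lemma notMem_of_mem_parts (P : Finpartition t) (ha : a ∉ t) {C : Finset ι}
    (hC : C ∈ P.parts) : a ∉ C := fun h => ha (P.le hC h)

def insertElem (ha : a ∉ t) :
    (Σ P : Finpartition t, Option P.parts) → Finpartition (insert a t)
  | ⟨P, none⟩ => P.extendSingleton ha
  | ⟨P, some B⟩ => P.insertIntoPart ha B.2

lemma image_sdiff_singleton_eq_self (P : Finpartition t) (ha : a ∉ t) {S : Finset (Finset ι)}
    (hS : S ⊆ P.parts) : S.image (· \ {a}) = S := by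
  conv_rhs => rw [← image_id (s := S)]
  refine image_congr fun C hC => ?_
  simp [sdiff_singleton_eq_erase, erase_eq_of_notMem (P.notMem_of_mem_parts ha (hS hC))]

lemma avoid_insertElem_parts (ha : a ∉ t) (x : Σ P : Finpartition t, Option P.parts) :
    ((insertElem ha x).avoid {a}).parts = x.1.parts := by
  obtain ⟨P, _ | ⟨B, hB⟩⟩ := x
  · rw [insertElem, avoid_parts, extendSingleton_parts, image_insert,
      P.image_sdiff_singleton_eq_self ha subset_rfl, sdiff_self, bot_eq_empty,
      erase_insert P.empty_notMem_parts]
  · rw [insertElem, avoid_parts, insertIntoPart_parts, image_insert,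
      P.image_sdiff_singleton_eq_self ha (erase_subset B P.parts),
      insert_sdiff_of_mem _ (mem_singleton_self a), sdiff_singleton_eq_erase,
      erase_eq_of_notMem (P.notMem_of_mem_parts ha hB), insert_erase hB, bot_eq_empty,
      erase_eq_of_notMem P.empty_notMem_parts]

lemma erase_part_insertElem (ha : a ∉ t) (x : Σ P : Finpartition t, Option P.parts) :
    ((insertElem ha x).part a).erase a = x.2.elim ∅ Subtype.val := by
  obtain ⟨P, _ | ⟨B, hB⟩⟩ := x
  · rw [insertElem, part_eq_of_mem _ (by simp) (mem_singleton_self a)]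
    simp
  · rw [insertElem, part_eq_of_mem _ (by simp) (mem_insert_self a B),
      erase_insert (P.notMem_of_mem_parts ha hB)]
    rfl

lemma insertElem_injective (ha : a ∉ t) : Function.Injective (insertElem ha) := by
  rintro ⟨P, o⟩ ⟨P', o'⟩ h
  obtain rfl : P = P' := Finpartition.ext <| by
    simpa only [avoid_insertElem_parts] using congrArg (fun Q => (Q.avoid {a}).parts) h
  have ho := congrArg (fun Q => (Q.part a).erase a) h
  simp only [erase_part_insertElem] at ho
  congr
  rcases o with _ | ⟨B, hB⟩ <;> rcases o' with _ | ⟨B', hB'⟩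
  · rfl
  · exact absurd ho.symm (P.nonempty_of_mem_parts hB').ne_empty
  · exact absurd ho (P.nonempty_of_mem_parts hB).ne_empty
  · exact congrArg some (Subtype.ext ho)

lemma exists_extendSingleton_eq (Q : Finpartition (insert a t)) (ha : a ∉ t)
    (h : {a} ∈ Q.parts) : ∃ P : Finpartition t, P.extendSingleton ha = Q :=
  ⟨(Q.erasePart h).copy (by rw [sdiff_singleton_eq_erase, erase_insert ha]),
    Finpartition.ext (by simp [insert_erase h])⟩

lemma exists_insertIntoPart_eq (Q : Finpartition (insert a t)) (ha : a ∉ t) {T : Finset ι}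
    (hT : T ∈ Q.parts) (haT : a ∈ T) (hTa : T ≠ {a}) :
    ∃ (P : Finpartition t) (hB : T.erase a ∈ P.parts), P.insertIntoPart ha hB = Q := by
  have hne : T.erase a ≠ ∅ := by simp [erase_eq_empty_iff, hTa, Q.ne_empty hT]
  have hnotin : T.erase a ∉ Q.parts := fun h => by
    obtain ⟨x, hx⟩ := nonempty_iff_ne_empty.2 hne
    have := Q.eq_of_mem_parts h hT hx (mem_of_mem_erase hx)
    exact notMem_erase a T (by rwa [this])
  have hsup : (insert a t \ T) ⊔ T.erase a = t := by
    have := Q.le hT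
    ext x
    simp only [sup_eq_union, mem_union, mem_sdiff, mem_erase]
    grind
  refine ⟨(Q.erasePart hT).extend hne (sdiff_disjoint.mono_right (erase_subset a T)) hsup,
    by simp, Finpartition.ext ?_⟩
  simp [erase_eq_of_notMem (fun h => hnotin (mem_of_mem_erase h)), insert_erase haT,
    insert_erase hT]

lemma insertElem_surjective (ha : a ∉ t) : Function.Surjective (insertElem ha) := by
  intro Q
  obtain ⟨T, hT, haT⟩ := Q.exists_mem (mem_insert_self a t)
  by_cases hTa : T = {a}
  · subst hTa
    obtain ⟨P, rfl⟩ := exists_extendSingleton_eq Q ha hT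
    exact ⟨⟨P, none⟩, rfl⟩
  · obtain ⟨P, hB, rfl⟩ := exists_insertIntoPart_eq Q ha hT haT hTa
    exact ⟨⟨P, some ⟨_, hB⟩⟩, rfl⟩

lemma insertElem_bijective (ha : a ∉ t) : Function.Bijective (insertElem ha) :=
  ⟨insertElem_injective ha, insertElem_surjective ha⟩

variable {R : Type*} [CommSemiring R]

def eppfWeight (α : R) (P : Finpartition s) : R := ∏ B ∈ P.parts, α * ((#B - 1)! : R)

lemma eppfWeight_extendSingleton (α : R) (P : Finpartition t) (ha : a ∉ t) :
    eppfWeight α (P.extendSingleton ha) = α * eppfWeight α P := by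
  rw [eppfWeight, extendSingleton_parts,
    prod_insert fun h => P.notMem_of_mem_parts ha h (mem_singleton_self a)]
  simp [eppfWeight]

lemma eppfWeight_insertIntoPart (α : R) (P : Finpartition t) (ha : a ∉ t) (hB : B ∈ P.parts) :
    eppfWeight α (P.insertIntoPart ha hB) = #B * eppfWeight α P := by
  have hnew : insert a B ∉ P.parts.erase B := fun h =>
    P.notMem_of_mem_parts ha (mem_of_mem_erase h) (mem_insert_self a B)
  have hB0 : #B ≠ 0 := (P.nonempty_of_mem_parts hB).card_pos.ne'
  rw [eppfWeight, insertIntoPart_parts, prod_insert hnew,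
    card_insert_of_notMem (P.notMem_of_mem_parts ha hB), Nat.add_sub_cancel, eppfWeight,
    ← mul_prod_erase _ _ hB, ← Nat.mul_factorial_pred hB0]
  push_cast
  ring

lemma sum_eppfWeight_insertElem (α : R) (ha : a ∉ t) (P : Finpartition t) :
    ∑ o : Option P.parts, eppfWeight α (insertElem ha ⟨P, o⟩) =
      (α + #t) * eppfWeight α P := by
  simp only [Fintype.sum_option, insertElem, eppfWeight_extendSingleton,
    eppfWeight_insertIntoPart]
  rw [sum_coe_sort P.parts (fun B => (#B : R) * eppfWeight α P), ← sum_mul, ← Nat.cast_sum,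
    P.sum_card_parts]
  ring

theorem sum_eppfWeight (α : R) (s : Finset ι) :
    ∑ P : Finpartition s, eppfWeight α P = ∏ k ∈ range #s, (α + k) := by
  induction s using Finset.induction_on with
  | empty =>
    have : Unique (Finpartition (∅ : Finset ι)) := inferInstanceAs (Unique (Finpartition ⊥))
    simp [eppfWeight, parts_eq_empty_iff.2 rfl]
  | insert a t ha ih =>
    rw [← Fintype.sum_bijective _ (insertElem_bijective ha) _ _ fun _ => rfl,
      ← univ_sigma_univ, sum_sigma]
    simp only [sum_eppfWeight_insertElem, ← mul_sum, ih, card_insert_of_notMem ha,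
      prod_range_succ]
    ring

end Finpartition

theorem dirichlet_eppf_sums_to_one_general (α : ℝ) (N : ℕ) :
    ∑ P : Finpartition (univ : Finset (Fin N)),
        α ^ P.parts.card * ∏ B ∈ P.parts, (Nat.factorial (B.card - 1) : ℝ) =
      ∏ t ∈ range N, (α + t) := by
  convert Finpartition.sum_eppfWeight α (univ : Finset (Fin N)) using 2 with P
  · rw [Finpartition.eppfWeight, prod_mul_distrib, prod_const]
  · simp

/-- The Dirichlet-process EPPF sums to one: summing over all set partitions `P`
of `{0,…,N-1}`, `∑_P α^{|P|} ∏_{B ∈ P} (|B|-1)! = ∏_{t=0}^{N-1} (α + t)`. -/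
theorem dirichlet_eppf_sums_to_one (α : ℝ) (N : ℕ) (hN : 1 ≤ N) :
    ∑ P : Finpartition (univ : Finset (Fin N)),
        α ^ P.parts.card * ∏ B ∈ P.parts, (Nat.factorial (B.card - 1) : ℝ) =
      ∏ t ∈ range N, (α + t) :=
  dirichlet_eppf_sums_to_one_general α N
end

section
/- For all real numbers α and d and every natural number N ≥ 1, summing over all set partitions P of {0, …, N−1}: ∑_P (∏_{j=1}^{|P|−1} (α + j·d)) · ∏_{B ∈ P} (∏_{t=0}^{|B|−2} (1 − d + t)) = ∏_{t=0}^{N−2} (α + 1 + t), where |P| is the number of blocks of P and |B| is the cardinality of block B. -/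
open Finset

/-!
Chinese restaurant construction: every partition of `insert a s` comes from a unique partition
`Q` of `s` by seating `a` either at a table `B` of `Q` or at a new table. This multiplies the
weight by `#B - d`, resp. `α + #Q.parts * d`, and since the table sizes add up to `#s`, these
factors sum to `α + #s` whatever `Q` is. So each new element multiplies the total weight by
`α + #s`.
-/

lemma Finset.inter_eq_erase_of_subset_insert {ι : Type*} [DecidableEq ι] {s D : Finset ι} {a : ι}
    (ha : a ∉ s) (hD : D ⊆ insert a s) : D ∩ s = D.erase a := by
  grind

namespace Finpartition

variable {ι : Type*} [DecidableEq ι] {s : Finset ι} {a : ι} {B : Finset ι}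

lemma subset_of_mem_insert_empty (Q : Finpartition s) (hB : B ∈ insert ∅ Q.parts) : B ⊆ s := by
  rcases mem_insert.1 hB with rfl | hB
  exacts [empty_subset s, Q.le hB]

lemma union_sup_parts_erase (Q : Finpartition s) (hB : B ∈ insert ∅ Q.parts) :
    B ∪ (Q.parts.erase B).sup id = s := by
  rcases mem_insert.1 hB with rfl | hB
  · rw [erase_eq_of_notMem Q.empty_notMem_parts, empty_union, Q.sup_parts]
  · conv_rhs => rw [← Q.sup_parts, ← insert_erase hB, sup_insert]
    rfl

/-- Put `a` into the part `B` of `Q`; the choice `B = ∅` makes `{a}` a new part. -/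
@[simps parts]
def insertInPart (Q : Finpartition s) (ha : a ∉ s) (B : Finset ι) (hB : B ∈ insert ∅ Q.parts) :
    Finpartition (insert a s) where
  parts := insert (insert a B) (Q.parts.erase B)
  supIndep := by
    rw [supIndep_iff_pairwiseDisjoint, coe_insert]
    refine (Q.disjoint.subset (coe_subset.2 (erase_subset _ _))).insert fun D hD _ => ?_
    obtain ⟨hDB, hD⟩ := mem_erase.1 hD
    refine disjoint_insert_left.2 ⟨fun haD => ha (Q.le hD haD), ?_⟩
    rcases mem_insert.1 hB with rfl | hB
    exacts [disjoint_empty_left D, Q.disjoint hB hD hDB.symm]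
  sup_parts := by
    rw [sup_insert, id, sup_eq_union, insert_union, union_sup_parts_erase Q hB]
  bot_notMem := by
    rw [bot_eq_empty, mem_insert, not_or]
    exact ⟨(insert_ne_empty a B).symm, fun h => Q.empty_notMem_parts (mem_of_mem_erase h)⟩

lemma restrict_insertInPart (Q : Finpartition s) (ha : a ∉ s) (hB : B ∈ insert ∅ Q.parts) :
    (Q.insertInPart ha B hB).restrict (subset_insert a s) = Q := by
  have hBs : insert a B ⊓ s = B := by
    rw [inf_eq_inter, insert_inter_of_notMem ha, inter_eq_left.2 (Q.subset_of_mem_insert_empty hB)]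
  have hparts : (Q.parts.erase B).image (· ⊓ s) = Q.parts.erase B := by
    rw [image_congr fun D hD => inf_eq_left.2 (Q.le (mem_of_mem_erase hD)), image_id']
  refine Finpartition.ext ?_
  show ((insert (insert a B) (Q.parts.erase B)).image (· ⊓ s)).erase ⊥ = Q.parts
  rw [image_insert, hBs, hparts, bot_eq_empty]
  rcases mem_insert.1 hB with rfl | hB
  · rw [erase_insert (notMem_erase _ _), erase_eq_of_notMem Q.empty_notMem_parts]
  · rw [insert_erase hB, erase_eq_of_notMem Q.empty_notMem_parts]

lemma part_insertInPart (Q : Finpartition s) (ha : a ∉ s) (hB : B ∈ insert ∅ Q.parts) :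
    (Q.insertInPart ha B hB).part a = insert a B :=
  part_eq_of_mem _ (mem_insert_self _ _) (mem_insert_self a B)

lemma parts_restrict_insert (P : Finpartition (insert a s)) (ha : a ∉ s) :
    (P.restrict (subset_insert a s)).parts =
      (insert ((P.part a).erase a) (P.parts.erase (P.part a))).erase ∅ := by
  have hT : P.part a ∈ P.parts := P.part_mem.2 (mem_insert_self a s)
  have hrest : (P.parts.erase (P.part a)).image (· ⊓ s) = P.parts.erase (P.part a) := by
    refine (image_congr fun D hD => ?_).trans image_id'
    obtain ⟨hDT, hD⟩ := mem_erase.1 hD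
    have haD : a ∉ D := fun haD => hDT (P.part_eq_of_mem hD haD).symm
    rw [inf_eq_inter, Finset.inter_eq_erase_of_subset_insert ha (P.le hD), erase_eq_of_notMem haD]
  show (P.parts.image (· ⊓ s)).erase ⊥ = _
  rw [← insert_erase hT, image_insert, hrest, inf_eq_inter,
    Finset.inter_eq_erase_of_subset_insert ha (P.le hT), insert_erase hT, bot_eq_empty]

lemma eq_insertInPart_restrict (P : Finpartition (insert a s)) (ha : a ∉ s) :
    ∃ hB, (P.restrict (subset_insert a s)).insertInPart ha ((P.part a).erase a) hB = P := by
  set T := P.part a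
  have hT : T ∈ P.parts := P.part_mem.2 (mem_insert_self a s)
  have haT : a ∈ T := P.mem_part_self.2 (mem_insert_self a s)
  have hnot : T.erase a ∉ P.parts.erase T := by
    intro h
    obtain ⟨hne, hmem⟩ := mem_erase.1 h
    obtain ⟨b, hb⟩ := P.nonempty_of_mem_parts hmem
    exact hne (P.eq_of_mem_parts hmem hT hb (mem_of_mem_erase hb))
  refine ⟨?_, Finpartition.ext ?_⟩
  · rw [parts_restrict_insert P ha, mem_insert, mem_erase]
    by_cases h : T.erase a = ∅
    exacts [Or.inl h, Or.inr ⟨h, mem_insert_self _ _⟩]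
  · rw [insertInPart_parts, parts_restrict_insert P ha, erase_right_comm, erase_insert hnot,
      erase_eq_of_notMem fun h => P.empty_notMem_parts (mem_of_mem_erase h), insert_erase haT,
      insert_erase hT]

lemma sum_finpartition_insert {M : Type*} [AddCommMonoid M] (ha : a ∉ s)
    (f : Finpartition (insert a s) → M) :
    ∑ P, f P =
      ∑ Q : Finpartition s, ∑ B : (insert ∅ Q.parts : Finset (Finset ι)),
        f (Q.insertInPart ha B B.2) := by
  refine (Fintype.sum_bijective
    (fun x : Σ Q : Finpartition s, (insert ∅ Q.parts : Finset (Finset ι)) =>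
      x.1.insertInPart ha x.2 x.2.2) ⟨?_, ?_⟩ _ _ fun _ => rfl).symm.trans (Fintype.sum_sigma _)
  · rintro ⟨Q, B, hB⟩ ⟨Q', B', hB'⟩ h
    obtain rfl : Q = Q' := by
      rw [← restrict_insertInPart Q ha hB, ← restrict_insertInPart Q' ha hB']
      exact congrArg (restrict · _) h
    have haB : a ∉ B := fun h => ha (Q.subset_of_mem_insert_empty hB h)
    have haB' : a ∉ B' := fun h => ha (Q.subset_of_mem_insert_empty hB' h)
    obtain rfl : B = B' := by
      rw [← erase_insert haB, ← erase_insert haB', ← part_insertInPart Q ha hB,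
        ← part_insertInPart Q ha hB']
      exact congrArg (fun P => (part P a).erase a) h
    rfl
  · intro P
    obtain ⟨hB, hP⟩ := eq_insertInPart_restrict P ha
    exact ⟨⟨_, _, hB⟩, hP⟩

variable {R : Type*} [CommRing R]

def pitmanYorWeight (α d : R) (P : Finpartition s) : R :=
  (∏ j ∈ range (#P.parts - 1), (α + ((j : R) + 1) * d)) *
    ∏ B ∈ P.parts, ∏ t ∈ range (#B - 1), (1 - d + (t : R))

lemma pitmanYorWeight_insertInPart_empty (α d : R) (Q : Finpartition s) (ha : a ∉ s)
    (hQ : Q.parts.Nonempty) :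
    pitmanYorWeight α d (Q.insertInPart ha ∅ (mem_insert_self _ _)) =
      (α + #Q.parts * d) * pitmanYorWeight α d Q := by
  have ha' : {a} ∉ Q.parts := fun h => ha (Q.le h (mem_singleton_self a))
  obtain ⟨k, hk⟩ := Nat.exists_eq_add_one_of_ne_zero hQ.card_pos.ne'
  simp only [pitmanYorWeight, insertInPart_parts, insert_empty_eq,
    erase_eq_of_notMem Q.empty_notMem_parts, card_insert_of_notMem ha', prod_insert ha', hk,
    card_singleton, Nat.add_sub_cancel, prod_range_succ]
  push_cast
  ring

lemma pitmanYorWeight_insertInPart_of_mem (α d : R) (Q : Finpartition s) (ha : a ∉ s)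
    (hB : B ∈ Q.parts) :
    pitmanYorWeight α d (Q.insertInPart ha B (mem_insert_of_mem hB)) =
      (#B - d) * pitmanYorWeight α d Q := by
  have haB : a ∉ B := fun h => ha (Q.le hB h)
  have haB' : insert a B ∉ Q.parts.erase B :=
    fun h => ha (Q.le (mem_of_mem_erase h) (mem_insert_self a B))
  obtain ⟨m, hm⟩ := Nat.exists_eq_add_one_of_ne_zero (Q.nonempty_of_mem_parts hB).card_pos.ne'
  have hcard : #(Q.parts.erase B) + 1 = #Q.parts := card_erase_add_one hB
  rw [pitmanYorWeight, pitmanYorWeight, insertInPart_parts, card_insert_of_notMem haB', hcard,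
    prod_insert haB', ← mul_prod_erase Q.parts _ hB, card_insert_of_notMem haB, hm,
    Nat.add_sub_cancel, prod_range_succ]
  push_cast
  ring

lemma sum_pitmanYorWeight_insertInPart (α d : R) (Q : Finpartition s) (ha : a ∉ s)
    (hs : s.Nonempty) :
    ∑ B : (insert ∅ Q.parts : Finset (Finset ι)), pitmanYorWeight α d (Q.insertInPart ha B B.2) =
      (α + #s) * pitmanYorWeight α d Q := by
  have hQ : Q.parts.Nonempty := Q.parts_nonempty hs.ne_empty
  let c (B : Finset ι) : R := (if B = ∅ then α + #Q.parts * d else #B - d) * pitmanYorWeight α d Q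
  calc ∑ B : (insert ∅ Q.parts : Finset (Finset ι)), pitmanYorWeight α d (Q.insertInPart ha B B.2)
      = ∑ B ∈ insert ∅ Q.parts, c B := by
        rw [← sum_coe_sort (insert ∅ Q.parts) c]
        refine Fintype.sum_congr _ _ fun ⟨B, hB⟩ => ?_
        rcases mem_insert.1 hB with rfl | hB
        · simp only [c, ↓reduceIte, pitmanYorWeight_insertInPart_empty α d Q ha hQ]
        · simp only [c, if_neg (Q.ne_empty hB), pitmanYorWeight_insertInPart_of_mem α d Q ha hB]
    _ = (α + #Q.parts * d + ∑ B ∈ Q.parts, (#B - d)) * pitmanYorWeight α d Q := by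
        rw [sum_insert Q.empty_notMem_parts, add_mul, sum_mul]
        congr 1
        exact sum_congr rfl fun B hB => by simp only [c, if_neg (Q.ne_empty hB)]
    _ = (α + #s) * pitmanYorWeight α d Q := by
        rw [sum_sub_distrib, ← Nat.cast_sum, Q.sum_card_parts, sum_const, nsmul_eq_mul]
        ring

theorem sum_pitmanYorWeight (α d : R) (hs : s.Nonempty) :
    ∑ P : Finpartition s, pitmanYorWeight α d P = ∏ t ∈ range (#s - 1), (α + 1 + (t : R)) := by
  induction hs using Nonempty.cons_induction with
  | singleton a =>
    have := ((isAtom_singleton a).uniqueFinpartition (P := ⊥)).instSubsingleton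
    rw [Fintype.sum_subsingleton _ (indiscrete (singleton_ne_empty a))]
    simp [pitmanYorWeight]
  | cons a s ha hs ih =>
    obtain ⟨n, hn⟩ := Nat.exists_eq_add_one_of_ne_zero hs.card_pos.ne'
    calc ∑ P : Finpartition (cons a s ha), pitmanYorWeight α d P
        = ∑ Q : Finpartition s, (α + #s) * pitmanYorWeight α d Q := by
          rw [cons_eq_insert, sum_finpartition_insert ha]
          exact sum_congr rfl fun Q _ => sum_pitmanYorWeight_insertInPart α d Q ha hs
      _ = ∏ t ∈ range (#(cons a s ha) - 1), (α + 1 + (t : R)) := by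
          rw [← mul_sum, ih, card_cons, Nat.add_sub_cancel, hn, Nat.add_sub_cancel, prod_range_succ]
          push_cast
          ring

end Finpartition

/-- The Pitman-Yor EPPF sums to one: summing over all set partitions `P` of
`{0,…,N-1}`,
`∑_P (∏_{j=1}^{|P|-1} (α + j d)) ∏_{B ∈ P} ∏_{t=0}^{|B|-2} (1 - d + t)
  = ∏_{t=0}^{N-2} (α + 1 + t)`. -/
theorem pitman_yor_eppf_sums_to_one (α d : ℝ) (N : ℕ) (hN : 1 ≤ N) :
    ∑ P : Finpartition (univ : Finset (Fin N)),
        (∏ j ∈ range (P.parts.card - 1), (α + ((j : ℝ) + 1) * d)) *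
          ∏ B ∈ P.parts, ∏ t ∈ range (B.card - 1), (1 - d + (t : ℝ)) =
      ∏ t ∈ range (N - 1), (α + 1 + (t : ℝ)) := by
  have h := Finpartition.sum_pitmanYorWeight α d (univ_nonempty_iff.2 ⟨(⟨0, hN⟩ : Fin N)⟩)
  rwa [card_univ, Fintype.card_fin] at h
end

section
/- Fix a natural number p ≥ 1 and a real κ with 0 < κ ≤ 1, and let Q := {x ∈ (Fin p → ℝ) : ∀ i, 0 ≤ x_i ≤ 1} equipped with Lebesgue measure (so Q has measure 1). There exists a constant C > 0, depending only on κ and p, such that for every ε with 0 < ε < 1 there is a finite set S of measurable functions g : (Fin p → ℝ) → ℝ with cardinality at most exp(C · ε^{−p/κ}), such that for every measurable f : (Fin p → ℝ) → ℝ with f ≥ 0 on Q, ∫_Q f dvol = 1, and whose square root satisfies |√(f(x)) − √(f(y))| ≤ (dist x y)^κ for all x, y ∈ Q, there exists g ∈ S with ∫_Q (√(f(x)) − √(g(x)))² dvol ≤ ε². -/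
/-!
Put a grid of mesh `1/(n+1)` on `[0,1]^p`, with `n + 1 ≥ (ε/2)^{-1/κ}`, so that the Hölder
function `h = √f` moves by at most `ε/2` between a point and the grid point of its cell, and
between a grid point `c` and its neighbour `c - (1,…,1)` (truncated at `0`), which is a step of
length `1/(n+1)` in the sup metric. Quantizing `h` at the grid points to multiples of `ε/2` gives
a cellwise constant function uniformly within `ε` of `h`, hence within `ε` in Hellinger distance.
Since `∫ f = 1` and `h` oscillates by at most `1`, `h ≤ 2`, so there are at most `4/ε + 1`
quantized values, and along the chain `c ↦ c - (1,…,1)`, which ends at the origin, they change by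
at most one step. A quantized function is therefore determined by its value at the origin and
`(n+1)^p` increments in `{-1, 0, 1}`, which leaves at most
`(4/ε + 1) · 3^{(n+1)^p} ≤ exp(C ε^{-p/κ})` of them.
-/

open MeasureTheory

/-- The unit cube `[0,1]^p` in `ℝ^p`. -/
def unitCube (p : ℕ) : Set (Fin p → ℝ) := {x | ∀ i, 0 ≤ x i ∧ x i ≤ 1}

theorem unitCube_eq_Icc (p : ℕ) : unitCube p = Set.Icc 0 1 := by
  ext x
  simp [unitCube, Pi.le_def, forall_and]

theorem measurableSet_unitCube (p : ℕ) : MeasurableSet (unitCube p) :=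
  unitCube_eq_Icc p ▸ measurableSet_Icc

theorem volume_unitCube (p : ℕ) : volume (unitCube p) = 1 := by
  simp [unitCube_eq_Icc, Real.volume_Icc_pi]

theorem dist_le_one_of_mem_unitCube {p : ℕ} {x y : Fin p → ℝ} (hx : x ∈ unitCube p)
    (hy : y ∈ unitCube p) : dist x y ≤ 1 :=
  (dist_pi_le_iff zero_le_one).2 fun i => Real.dist_le_of_mem_Icc_01 (hx i) (hy i)

open Finset

theorem eq_of_sub_apply_pred_eq {α G : Type*} [AddGroup G] {pred : α → α} {r : α}
    (hr : ∀ c, ∃ k, pred^[k] c = r) {φ ψ : α → G} (h₀ : φ r = ψ r)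
    (h : ∀ c, φ c - φ (pred c) = ψ c - ψ (pred c)) : φ = ψ := by
  suffices key : ∀ k c, pred^[k] c = r → φ c = ψ c from
    funext fun c => (hr c).elim fun k hk => key k c hk
  intro k
  induction k with
  | zero => rintro c rfl; exact h₀
  | succ k ih =>
    intro c hc
    have hpred : φ (pred c) = ψ (pred c) :=
      ih (pred c) (by rwa [Function.iterate_succ_apply] at hc)
    rw [← sub_add_cancel (φ c) (φ (pred c)), ← sub_add_cancel (ψ c) (ψ (pred c)), h c, hpred]

theorem card_filter_abs_sub_apply_pred_le {α : Type*} [Fintype α] [DecidableEq α]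
    {pred : α → α} {r : α} (hr : ∀ c, ∃ k, pred^[k] c = r) (K m : ℕ) :
    #{φ ∈ Fintype.piFinset fun _ : α => range K | ∀ c, |(φ c : ℤ) - φ (pred c)| ≤ m}
      ≤ K * (2 * m + 1) ^ Fintype.card α := by
  calc _ ≤ #(range K ×ˢ Fintype.piFinset fun _ : α => Icc (-(m : ℤ)) m) := by
        refine card_le_card_of_injOn (fun φ => (φ r, fun c => (φ c : ℤ) - φ (pred c))) ?_ ?_
        · intro φ hφ
          simp only [coe_filter, Fintype.mem_piFinset, mem_range, Set.mem_ofPred_eq] at hφ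
          simp only [coe_product, Set.mem_prod, mem_coe, mem_range, Fintype.mem_piFinset, mem_Icc,
            ← abs_le]
          exact ⟨hφ.1 r, hφ.2⟩
        · intro φ _ ψ _ hφψ
          simp only [Prod.mk.injEq] at hφψ
          have hcast := eq_of_sub_apply_pred_eq hr (φ := fun c => (φ c : ℤ))
            (ψ := fun c => (ψ c : ℤ)) (congrArg _ hφψ.1) (congrFun hφψ.2)
          exact funext fun c => by exact_mod_cast congrFun hcast c
    _ = K * (2 * m + 1) ^ Fintype.card α := by
        rw [card_product, card_range, Fintype.card_piFinset, prod_const, card_univ, Int.card_Icc]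
        congr 2
        omega

theorem natFloor_div_le_natFloor_div_add_one {a b η : ℝ} (hη : 0 < η) (hb : 0 ≤ b)
    (hab : a ≤ b + η) : ⌊a / η⌋₊ ≤ ⌊b / η⌋₊ + 1 := by
  rw [← Nat.floor_add_one (by positivity), div_add_one hη.ne']
  exact Nat.floor_mono (by gcongr)

theorem abs_natFloor_div_sub_natFloor_div_le_one {a b η : ℝ} (hη : 0 < η) (ha : 0 ≤ a)
    (hb : 0 ≤ b) (hab : |a - b| ≤ η) : |(⌊a / η⌋₊ : ℤ) - ⌊b / η⌋₊| ≤ 1 := by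
  rw [abs_le] at hab
  have hab' : ⌊a / η⌋₊ ≤ ⌊b / η⌋₊ + 1 :=
    natFloor_div_le_natFloor_div_add_one hη hb (by linarith)
  have hba' : ⌊b / η⌋₊ ≤ ⌊a / η⌋₊ + 1 :=
    natFloor_div_le_natFloor_div_add_one hη ha (by linarith)
  rw [abs_le]
  constructor <;> omega

theorem abs_sub_natFloor_div_mul_le {b η : ℝ} (hη : 0 < η) (hb : 0 ≤ b) :
    |b - ⌊b / η⌋₊ * η| ≤ η := by
  have hle := (le_div_iff₀ hη).1 (Nat.floor_le (div_nonneg hb hη.le))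
  have hlt := (div_lt_iff₀ hη).1 (Nat.lt_floor_add_one (b / η))
  rw [abs_le]
  constructor <;> nlinarith

theorem abs_div_sub_div_le_inv {a b d : ℝ} (hd : 0 < d) (h : |a - b| ≤ 1) :
    |a / d - b / d| ≤ d⁻¹ := by
  rw [← sub_div, abs_div, abs_of_pos hd, div_eq_mul_inv]
  exact mul_le_of_le_one_left (inv_nonneg.2 hd.le) h

namespace UnitCubeGrid

variable {p n : ℕ}

noncomputable def point (n : ℕ) (c : Fin p → Fin (n + 1)) : Fin p → ℝ :=
  fun i => (c i : ℝ) / (n + 1)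

noncomputable def cellOf (n : ℕ) (x : Fin p → ℝ) : Fin p → Fin (n + 1) :=
  fun i => Fin.clamp ⌊(n + 1) * x i⌋₊ n

def pred (c : Fin p → Fin (n + 1)) : Fin p → Fin (n + 1) :=
  fun i => ⟨c i - 1, by omega⟩

theorem point_mem_unitCube (c : Fin p → Fin (n + 1)) : point n c ∈ unitCube p := fun i => by
  have hc : (c i : ℝ) ≤ n := by exact_mod_cast Nat.lt_succ_iff.1 (c i).isLt
  exact ⟨by unfold point; positivity, div_le_one_of_le₀ (by linarith) (by positivity)⟩

theorem dist_point_pred_le (c : Fin p → Fin (n + 1)) :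
    dist (point n (pred c)) (point n c) ≤ (n + 1 : ℝ)⁻¹ := by
  refine (dist_pi_le_iff (by positivity)).2 fun i => abs_div_sub_div_le_inv (by positivity) ?_
  have hle : ((pred c i : ℕ) : ℝ) ≤ c i := by exact_mod_cast Nat.sub_le _ _
  have hge : (c i : ℝ) ≤ (pred c i : ℕ) + 1 := by norm_cast; simp only [pred]; omega
  rw [abs_le]
  constructor <;> linarith

theorem pred_iterate_eq_zero (c : Fin p → Fin (n + 1)) : pred^[n] c = 0 := by
  have key : ∀ k i, ((pred^[k] c) i : ℕ) = c i - k := by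
    intro k
    induction k with
    | zero => simp
    | succ k ih => intro i; simp only [Function.iterate_succ_apply', pred, ih]; omega
  funext i
  exact Fin.ext ((key n i).trans (by have := (c i).isLt; simp; omega))

theorem dist_point_cellOf_le {x : Fin p → ℝ} (hx : x ∈ unitCube p) :
    dist x (point n (cellOf n x)) ≤ (n + 1 : ℝ)⁻¹ := by
  refine (dist_pi_le_iff (by positivity)).2 fun i => ?_
  obtain ⟨hx0, hx1⟩ := hx i
  have hn : (0 : ℝ) < n + 1 := by positivity
  have hfloor := Nat.floor_le (show 0 ≤ (n + 1 : ℝ) * x i by positivity)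
  have hk : |(n + 1) * x i - (min ⌊(n + 1 : ℝ) * x i⌋₊ n : ℕ)| ≤ 1 := by
    rw [abs_le]
    rcases le_total ⌊(n + 1 : ℝ) * x i⌋₊ n with h | h
    · rw [min_eq_left h]
      constructor <;> linarith [Nat.lt_floor_add_one ((n + 1 : ℝ) * x i)]
    · rw [min_eq_right h]
      have : (n : ℝ) ≤ ⌊(n + 1 : ℝ) * x i⌋₊ := by exact_mod_cast h
      constructor <;> nlinarith
  have := abs_div_sub_div_le_inv hn hk
  rwa [mul_div_cancel_left₀ _ hn.ne'] at this

theorem measurable_cellOf : Measurable (cellOf (p := p) n) :=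
  measurable_pi_lambda _ fun i =>
    (measurable_from_nat (f := fun k => Fin.clamp k n)).comp
      (measurable_const.mul (measurable_pi_apply i)).nat_floor

def chains (n K : ℕ) : Finset ((Fin p → Fin (n + 1)) → ℕ) :=
  {φ ∈ Fintype.piFinset fun _ => range K | ∀ c, |(φ c : ℤ) - φ (pred c)| ≤ 1}

theorem card_chains_le (K : ℕ) : #(chains (p := p) n K) ≤ K * 3 ^ (n + 1) ^ p := by
  simpa [chains] using
    card_filter_abs_sub_apply_pred_le (fun c => ⟨n, pred_iterate_eq_zero c⟩) K 1

noncomputable def cellwiseSq (n : ℕ) (η : ℝ) (φ : (Fin p → Fin (n + 1)) → ℕ)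
    (x : Fin p → ℝ) : ℝ :=
  ((φ (cellOf n x) : ℝ) * η) ^ 2

theorem measurable_cellwiseSq (η : ℝ) (φ : (Fin p → Fin (n + 1)) → ℕ) :
    Measurable (cellwiseSq n η φ) :=
  (measurable_of_countable fun c => ((φ c : ℝ) * η) ^ 2).comp measurable_cellOf

open Classical in
noncomputable def net (p n K : ℕ) (η : ℝ) : Finset ((Fin p → ℝ) → ℝ) :=
  (chains n K).image (cellwiseSq n η)

theorem card_net_le (K : ℕ) (η : ℝ) : #(net p n K η) ≤ K * 3 ^ (n + 1) ^ p := by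
  classical
  exact card_image_le.trans (card_chains_le K)

theorem measurable_of_mem_net {K : ℕ} {η : ℝ} {g : (Fin p → ℝ) → ℝ}
    (hg : g ∈ net p n K η) : Measurable g := by
  classical
  obtain ⟨φ, -, rfl⟩ := mem_image.1 hg
  exact measurable_cellwiseSq η φ

theorem exists_mem_net_abs_sub_sqrt_le {K : ℕ} {η : ℝ} (hη : 0 < η) {h : (Fin p → ℝ) → ℝ}
    (h0 : ∀ x ∈ unitCube p, 0 ≤ h x) (hK : ∀ x ∈ unitCube p, h x < K * η)
    (hosc : ∀ x ∈ unitCube p, ∀ y ∈ unitCube p, dist x y ≤ (n + 1 : ℝ)⁻¹ → |h x - h y| ≤ η) :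
    ∃ g ∈ net p n K η, ∀ x ∈ unitCube p, |h x - √(g x)| ≤ 2 * η := by
  classical
  set φ : (Fin p → Fin (n + 1)) → ℕ := fun c => ⌊h (point n c) / η⌋₊
  have hφ : φ ∈ chains n K := by
    simp only [chains, mem_filter, Fintype.mem_piFinset, mem_range]
    refine ⟨fun c => (Nat.floor_lt (div_nonneg (h0 _ (point_mem_unitCube c)) hη.le)).2
      ((div_lt_iff₀ hη).2 (hK _ (point_mem_unitCube c))), fun c => ?_⟩
    refine abs_natFloor_div_sub_natFloor_div_le_one hη (h0 _ (point_mem_unitCube c))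
      (h0 _ (point_mem_unitCube _)) (hosc _ (point_mem_unitCube c) _ (point_mem_unitCube _) ?_)
    exact dist_comm (point n c) _ ▸ dist_point_pred_le c
  refine ⟨cellwiseSq n η φ, mem_image_of_mem _ hφ, fun x hx => ?_⟩
  have hsqrt : √(cellwiseSq n η φ x) = φ (cellOf n x) * η := Real.sqrt_sq (by positivity)
  have hpt := point_mem_unitCube (cellOf n x)
  rw [hsqrt, two_mul]
  calc |h x - φ (cellOf n x) * η|
      ≤ |h x - h (point n (cellOf n x))| + |h (point n (cellOf n x)) - φ (cellOf n x) * η| :=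
        abs_sub_le _ _ _
    _ ≤ η + η := add_le_add (hosc _ hx _ hpt (dist_point_cellOf_le hx))
        (abs_sub_natFloor_div_mul_le hη (h0 _ hpt))

end UnitCubeGrid

theorem sqrt_le_two_of_setIntegral_eq_one {X : Type*} [MeasurableSpace X] {μ : Measure X}
    {s : Set X} (hs : MeasurableSet s) (hμs : μ s = 1) {f : X → ℝ} (hf0 : ∀ x ∈ s, 0 ≤ f x)
    (hf : ∫ x in s, f x ∂μ = 1) (hosc : ∀ x ∈ s, ∀ y ∈ s, |√(f x) - √(f y)| ≤ 1) {x : X}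
    (hx : x ∈ s) : √(f x) ≤ 2 := by
  by_contra! hgt
  have hint : IntegrableOn f s μ := Integrable.of_integral_ne_zero (by rw [hf]; exact one_ne_zero)
  have hlow : ∀ y ∈ s, (√(f x) - 1) ^ 2 ≤ f y := fun y hy => by
    have hxy := (abs_le.1 (hosc x hx y hy)).2
    calc (√(f x) - 1) ^ 2 ≤ √(f y) ^ 2 := pow_le_pow_left₀ (by linarith) (by linarith) 2
      _ = f y := Real.sq_sqrt (hf0 y hy)
  have := setIntegral_ge_of_const_le_real hs (by simp [hμs]) hlow hint
  rw [hf, measureReal_def, hμs, ENNReal.toReal_one, mul_one] at this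
  nlinarith

theorem setIntegral_sq_le_of_abs_le {X : Type*} [MeasurableSpace X] {μ : Measure X}
    {s : Set X} (hμs : μ s < ⊤) {F : X → ℝ} {δ : ℝ} (hF : ∀ x ∈ s, |F x| ≤ δ) :
    ∫ x in s, F x ^ 2 ∂μ ≤ δ ^ 2 * μ.real s :=
  (Real.le_norm_self _).trans <| norm_setIntegral_le_of_norm_le_const hμs fun x hx => by
    rw [Real.norm_eq_abs, abs_pow]
    exact pow_le_pow_left₀ (abs_nonneg _) (hF x hx) 2

theorem rpow_inv_natFloor_rpow_neg_inv_add_one_le {δ κ : ℝ} (hδ : 0 < δ) (hκ : 0 < κ) :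
    ((⌊δ ^ (-κ⁻¹)⌋₊ + 1 : ℝ)⁻¹) ^ κ ≤ δ := by
  have hB : 0 < δ ^ (-κ⁻¹) := Real.rpow_pos_of_pos hδ _
  calc ((⌊δ ^ (-κ⁻¹)⌋₊ + 1 : ℝ)⁻¹) ^ κ ≤ ((δ ^ (-κ⁻¹))⁻¹) ^ κ := by
        gcongr
        exact (Nat.lt_floor_add_one _).le
    _ = δ := by
        rw [← Real.rpow_neg hδ.le, neg_neg, ← Real.rpow_mul hδ.le, inv_mul_cancel₀ hκ.ne',
          Real.rpow_one]

theorem natFloor_rpow_neg_inv_add_one_pow_le {δ κ : ℝ} (hδ : 0 < δ) (hδ1 : δ ≤ 1) (hκ : 0 < κ)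
    (p : ℕ) : (⌊δ ^ (-κ⁻¹)⌋₊ + 1 : ℝ) ^ p ≤ 2 ^ p * δ ^ (-p / κ) := by
  have hB : 1 ≤ δ ^ (-κ⁻¹) :=
    Real.one_le_rpow_of_pos_of_le_one_of_nonpos hδ hδ1 (by simp [hκ.le])
  calc (⌊δ ^ (-κ⁻¹)⌋₊ + 1 : ℝ) ^ p ≤ (2 * δ ^ (-κ⁻¹)) ^ p := by
        gcongr
        linarith [Nat.floor_le (by positivity : 0 ≤ δ ^ (-κ⁻¹))]
    _ = 2 ^ p * δ ^ (-p / κ) := by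
        rw [mul_pow, ← Real.rpow_natCast (δ ^ _), ← Real.rpow_mul hδ.le]
        congr 2
        ring

theorem natFloor_add_one_mul_three_pow_le {p : ℕ} (hp : 1 ≤ p) {κ ε : ℝ} (hκ0 : 0 < κ)
    (hκ1 : κ ≤ 1) (hε0 : 0 < ε) (hε1 : ε < 1) :
    (⌊4 / ε⌋₊ + 1 : ℝ) * 3 ^ (⌊(ε / 2) ^ (-κ⁻¹)⌋₊ + 1) ^ p
      ≤ Real.exp ((5 + 2 * 2 ^ p * 2 ^ (p / κ)) * ε ^ (-(p : ℝ) / κ)) := by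
  set T := ε ^ (-(p : ℝ) / κ)
  have hinvT : ε⁻¹ ≤ T := by
    rw [← Real.rpow_neg_one]
    refine Real.rpow_le_rpow_of_exponent_ge hε0 hε1.le ?_
    rw [neg_div, neg_le_neg_iff, le_div_iff₀ hκ0, one_mul]
    exact hκ1.trans (by exact_mod_cast hp)
  have hK : (⌊4 / ε⌋₊ + 1 : ℝ) ≤ 5 * T := by
    have h4 : (⌊4 / ε⌋₊ : ℝ) ≤ 4 * ε⁻¹ :=
      (Nat.floor_le (by positivity)).trans_eq (div_eq_mul_inv _ _)
    have h1 : 1 ≤ ε⁻¹ := (one_le_inv₀ hε0).2 hε1.le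
    linarith
  have hM : ((⌊(ε / 2) ^ (-κ⁻¹)⌋₊ + 1 : ℕ) ^ p : ℝ) ≤ 2 ^ p * 2 ^ (p / κ) * T := by
    have hsplit : (ε / 2) ^ (-(p : ℝ) / κ) = 2 ^ ((p : ℝ) / κ) * T := by
      rw [Real.div_rpow hε0.le zero_le_two, neg_div, Real.rpow_neg zero_le_two, div_inv_eq_mul,
        mul_comm, ← neg_div]
    push_cast
    rw [mul_assoc, ← hsplit]
    exact natFloor_rpow_neg_inv_add_one_pow_le (by positivity) (by linarith) hκ0 p
  calc (⌊4 / ε⌋₊ + 1 : ℝ) * 3 ^ (⌊(ε / 2) ^ (-κ⁻¹)⌋₊ + 1) ^ p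
      ≤ Real.exp (5 * T) * Real.exp 2 ^ (⌊(ε / 2) ^ (-κ⁻¹)⌋₊ + 1) ^ p := by
        gcongr
        · exact hK.trans ((le_add_of_nonneg_right zero_le_one).trans (Real.add_one_le_exp _))
        · linarith [Real.add_one_le_exp 2]
    _ = Real.exp (5 * T + 2 * ((⌊(ε / 2) ^ (-κ⁻¹)⌋₊ + 1 : ℕ) ^ p : ℝ)) := by
        rw [← Real.exp_nat_mul, ← Real.exp_add]
        push_cast
        ring_nf
    _ ≤ Real.exp ((5 + 2 * 2 ^ p * 2 ^ (p / κ)) * T) := by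
        gcongr
        nlinarith

/-- Hellinger-entropy bound for the class of probability densities on `[0,1]^p`
whose square roots lie in the unit Hölder ball with exponent `κ ∈ (0,1]`:
there is `C > 0` such that for every `0 < ε < 1` there is a finite set of
measurable functions of cardinality at most `exp (C ε^{-p/κ})` which is an
`ε`-net in Hellinger distance. -/
theorem hellinger_entropy_holder_densities
    (p : ℕ) (hp : 1 ≤ p) (κ : ℝ) (hκ0 : 0 < κ) (hκ1 : κ ≤ 1) :
    ∃ C : ℝ, 0 < C ∧
      ∀ ε : ℝ, 0 < ε → ε < 1 →
        ∃ S : Finset ((Fin p → ℝ) → ℝ),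
          (∀ g ∈ S, Measurable g) ∧
          (S.card : ℝ) ≤ Real.exp (C * ε ^ (-(p : ℝ) / κ)) ∧
          ∀ f : (Fin p → ℝ) → ℝ, Measurable f →
            (∀ x ∈ unitCube p, 0 ≤ f x) →
            (∫ x in unitCube p, f x ∂volume) = 1 →
            (∀ x ∈ unitCube p, ∀ y ∈ unitCube p,
              |Real.sqrt (f x) - Real.sqrt (f y)| ≤ dist x y ^ κ) →
            ∃ g ∈ S,
              (∫ x in unitCube p, (Real.sqrt (f x) - Real.sqrt (g x)) ^ 2 ∂volume)
                ≤ ε ^ 2 := by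
  refine ⟨5 + 2 * 2 ^ p * 2 ^ ((p : ℝ) / κ), by positivity, fun ε hε0 hε1 => ?_⟩
  set n := ⌊(ε / 2) ^ (-κ⁻¹)⌋₊
  set K := ⌊4 / ε⌋₊ + 1
  refine ⟨UnitCubeGrid.net p n K (ε / 2), fun g hg => UnitCubeGrid.measurable_of_mem_net hg,
    ?_, fun f _ hf0 hf1 hfH => ?_⟩
  · calc (#(UnitCubeGrid.net p n K (ε / 2)) : ℝ) ≤ K * 3 ^ (n + 1) ^ p := by
          exact_mod_cast UnitCubeGrid.card_net_le K (ε / 2)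
      _ ≤ _ := by push_cast [K]; exact natFloor_add_one_mul_three_pow_le hp hκ0 hκ1 hε0 hε1
  have hle2 : ∀ x ∈ unitCube p, √(f x) ≤ 2 := fun x hx =>
    sqrt_le_two_of_setIntegral_eq_one (measurableSet_unitCube p) (volume_unitCube p) hf0 hf1
      (fun y hy z hz => (hfH y hy z hz).trans
        (Real.rpow_le_one dist_nonneg (dist_le_one_of_mem_unitCube hy hz) hκ0.le)) hx
  have hK : 2 < K * (ε / 2) := by
    have := (div_lt_iff₀ hε0).1 (Nat.lt_floor_add_one (4 / ε))
    push_cast [K]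
    linarith
  obtain ⟨g, hgS, hg⟩ := UnitCubeGrid.exists_mem_net_abs_sub_sqrt_le (half_pos hε0)
    (fun x _ => Real.sqrt_nonneg (f x)) (fun x hx => (hle2 x hx).trans_lt hK)
    fun x hx y hy hxy => (hfH x hx y hy).trans <|
      (Real.rpow_le_rpow dist_nonneg hxy hκ0.le).trans
        (rpow_inv_natFloor_rpow_neg_inv_add_one_le (half_pos hε0) hκ0)
  refine ⟨g, hgS, ?_⟩
  calc _ ≤ ε ^ 2 * volume.real (unitCube p) :=
        setIntegral_sq_le_of_abs_le (by simp [volume_unitCube]) fun x hx =>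
          (hg x hx).trans_eq (by ring)
    _ = ε ^ 2 := by simp [measureReal_def, volume_unitCube]
end

section
/- Let α > 0 and 0 < d < 1 be real numbers, and define the sequence k : ℕ → ℝ by k(1) = 1 and k(n+1) = k(n) + (α + d·k(n))/(α + n) for n ≥ 1. Then there exist constants c₁, c₂ > 0 such that c₁ · n^d ≤ k(n) ≤ c₂ · n^d for every n ≥ 1. -/
/-!
Write `x = α + n`. The recurrence gives `k (n+1) ≥ k n * (1 + d/x)`, while the shifted sequence
`k n + α/d` satisfies `k (n+1) + α/d = (k n + α/d) * (1 + d/x)` exactly. Bernoulli's inequality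
squeezes the factor: `((x+1)/x)^d ≤ 1 + d/x ≤ (x/(x-1))^d`. Hence `k n / (α+n)^d` is nondecreasing
and `(k n + α/d) / (α+n-1)^d` is nonincreasing, which gives both power-law bounds.
-/

open Real

theorem rpow_add_le_rpow_mul_one_add {x t d : ℝ} (hx : 0 < x) (ht : -x ≤ t)
    (hd0 : 0 ≤ d) (hd1 : d ≤ 1) : (x + t) ^ d ≤ x ^ d * (1 + d * t / x) := by
  have hs : -1 ≤ t / x := by rwa [le_div_iff₀ hx, neg_one_mul]
  calc (x + t) ^ d = x ^ d * (1 + t / x) ^ d := by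
        rw [← mul_rpow hx.le (by linarith), mul_add, mul_div_cancel₀ _ hx.ne', mul_one]
    _ ≤ x ^ d * (1 + d * (t / x)) := by
        gcongr; exact rpow_one_add_le_one_add_mul_self hs hd0 hd1
    _ = x ^ d * (1 + d * t / x) := by rw [mul_div_assoc]

theorem sub_one_rpow_mul_one_add_le_rpow {x d : ℝ} (hx : 1 ≤ x) (hd0 : 0 ≤ d) (hd1 : d ≤ 1) :
    (x - 1) ^ d * (1 + d / x) ≤ x ^ d := by
  have hbern := rpow_add_le_rpow_mul_one_add (t := -1) (by linarith : (0 : ℝ) < x)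
    (by linarith) hd0 hd1
  calc (x - 1) ^ d * (1 + d / x) ≤ x ^ d * (1 - d / x) * (1 + d / x) := by
        gcongr
        simpa [neg_div, ← sub_eq_add_neg] using hbern
    _ = x ^ d * (1 - (d / x) ^ 2) := by ring
    _ ≤ x ^ d := by
        have : 0 ≤ x ^ d := by positivity
        nlinarith [sq_nonneg (d / x)]

/-- Cross-multiplied form of "`v / u` is antitone from `m` on", when `u` grows at least and `v` at
most by the factor `r`. -/
theorem cross_mul_le_of_step_le {u v r : ℕ → ℝ} {m : ℕ} (hum : 0 ≤ u m) (hvm : 0 ≤ v m)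
    (hr : ∀ n, m ≤ n → 0 ≤ r n) (hu : ∀ n, m ≤ n → u n * r n ≤ u (n + 1))
    (hv : ∀ n, m ≤ n → v (n + 1) ≤ v n * r n) :
    ∀ n, m ≤ n → v n * u m ≤ v m * u n := by
  intro n hn
  induction n, hn using Nat.le_induction with
  | base => rw [mul_comm]
  | succ n hn ih =>
    calc v (n + 1) * u m ≤ v n * r n * u m := by gcongr; exact hv n hn
      _ = v n * u m * r n := by ring
      _ ≤ v m * u n * r n := by gcongr; exact hr n hn
      _ = v m * (u n * r n) := by ring
      _ ≤ v m * u (n + 1) := by gcongr; exact hu n hn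

section PitmanYor

variable {α d : ℝ} {k : ℕ → ℝ}

theorem pitmanYor_mul_le_succ (hα : 0 < α)
    (hrec : ∀ n : ℕ, 1 ≤ n → k (n + 1) = k n + (α + d * k n) / (α + n))
    {n : ℕ} (hn : 1 ≤ n) : k n * (1 + d / (α + n)) ≤ k (n + 1) := by
  have hx : 0 < α + n := by positivity
  have hsplit : k (n + 1) = k n * (1 + d / (α + n)) + α / (α + n) := by
    rw [hrec n hn]; field_simp; ring
  rw [hsplit]
  have : 0 ≤ α / (α + n) := by positivity
  linarith

theorem pitmanYor_succ_add_div_eq (hα : 0 < α) (hd : d ≠ 0)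
    (hrec : ∀ n : ℕ, 1 ≤ n → k (n + 1) = k n + (α + d * k n) / (α + n))
    {n : ℕ} (hn : 1 ≤ n) : k (n + 1) + α / d = (k n + α / d) * (1 + d / (α + n)) := by
  have hx : α + n ≠ 0 := by positivity
  rw [hrec n hn]; field_simp; ring

theorem pitmanYor_rpow_le_mul (hα : 0 < α) (hd0 : 0 ≤ d) (hd1 : d ≤ 1) (hk1 : k 1 = 1)
    (hrec : ∀ n : ℕ, 1 ≤ n → k (n + 1) = k n + (α + d * k n) / (α + n))
    {n : ℕ} (hn : 1 ≤ n) : (α + n) ^ d ≤ (α + 1) ^ d * k n := by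
  have key := cross_mul_le_of_step_le (u := k) (v := fun n : ℕ => (α + n) ^ d)
    (r := fun n => 1 + d / (α + n)) (by simp [hk1]) (by positivity) (fun n _ => by positivity)
    (fun n hn => pitmanYor_mul_le_succ hα hrec hn) (fun n _ => by
      simpa [add_assoc, mul_div_assoc] using
        rpow_add_le_rpow_mul_one_add (x := α + n) (t := 1) (by positivity) (by linarith) hd0 hd1)
    n hn
  simpa [hk1] using key

theorem pitmanYor_add_div_mul_le (hα : 0 < α) (hd0 : 0 < d) (hd1 : d ≤ 1) (hk1 : k 1 = 1)
    (hrec : ∀ n : ℕ, 1 ≤ n → k (n + 1) = k n + (α + d * k n) / (α + n))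
    {n : ℕ} (hn : 1 ≤ n) : (k n + α / d) * α ^ d ≤ (1 + α / d) * (α + n - 1) ^ d := by
  have key := cross_mul_le_of_step_le (u := fun n : ℕ => (α + n - 1) ^ d)
    (v := fun n => k n + α / d) (r := fun n => 1 + d / (α + n)) (by simp; positivity)
    (by simp [hk1]; positivity) (fun n _ => by positivity) (fun n hn => by
      have : (1 : ℝ) ≤ n := by exact_mod_cast hn
      convert sub_one_rpow_mul_one_add_le_rpow (x := α + n) (by linarith) hd0.le hd1 using 2
      push_cast; ring)
    (fun n hn => (pitmanYor_succ_add_div_eq hα hd0.ne' hrec hn).le) n hn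
  simpa [hk1] using key

end PitmanYor

/-- Power-law growth of the expected number of clusters for the Pitman-Yor
process: if `k 1 = 1` and `k (n+1) = k n + (α + d * k n)/(α + n)` for `n ≥ 1`,
then `k n` is bounded above and below by constant multiples of `n^d`. -/
theorem pitman_yor_expected_clusters_power_law
    (α d : ℝ) (hα : 0 < α) (hd0 : 0 < d) (hd1 : d < 1)
    (k : ℕ → ℝ) (hk1 : k 1 = 1)
    (hrec : ∀ n : ℕ, 1 ≤ n → k (n + 1) = k n + (α + d * k n) / (α + n)) :
    ∃ c₁ : ℝ, 0 < c₁ ∧ ∃ c₂ : ℝ, 0 < c₂ ∧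
      ∀ n : ℕ, 1 ≤ n → c₁ * (n : ℝ) ^ d ≤ k n ∧ k n ≤ c₂ * (n : ℝ) ^ d := by
  refine ⟨((α + 1) ^ d)⁻¹, by positivity, (1 + α / d) * (α + 1) ^ d / α ^ d, by positivity,
    fun n hn => ⟨?_, ?_⟩⟩
  all_goals have hn' : (1 : ℝ) ≤ n := by exact_mod_cast hn
  · rw [inv_mul_le_iff₀ (by positivity)]
    exact (rpow_le_rpow (by positivity) (by linarith) hd0.le).trans
      (pitmanYor_rpow_le_mul hα hd0.le hd1.le hk1 hrec hn)
  · rw [div_mul_eq_mul_div, le_div_iff₀ (by positivity)]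
    calc k n * α ^ d ≤ (k n + α / d) * α ^ d := by gcongr; linarith [div_pos hα hd0]
      _ ≤ (1 + α / d) * (α + n - 1) ^ d := pitmanYor_add_div_mul_le hα hd0 hd1.le hk1 hrec hn
      _ ≤ (1 + α / d) * ((α + 1) * n) ^ d := by
          gcongr
          · linarith
          · nlinarith
      _ = (1 + α / d) * (α + 1) ^ d * n ^ d := by
          rw [mul_rpow (by positivity) (by positivity)]; ring
end
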